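/- Let K be a propositional base. If μ is an a-minimal o-model of K, then ∼_c^K ∖ diff_a(μ) is a Maximal Consistency Relation of K. -/

import Mathlib

namespace Occ

/-- Propositional formulas over variables indexed by `ℕ`,
built from variables using negation and conjunction. -/
inductive Form : Type where
  | var : ℕ → Form
  | neg : Form → Form
  | conj : Form → Form → Form
deriving DecidableEq

/-- Boolean evaluation of a formula under an interpretation `w`. -/
def eval (w : ℕ → Bool) : Form → Bool
  | .var p => w p
  | .neg φ => !(eval w φ)
  | .conj φ ψ => eval w φ && eval w ψ

/-- The variables occurring in a formula. -/
def vars : Form → Finset ℕ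
  | .var p => {p}
  | .neg φ => vars φ
  | .conj φ ψ => vars φ ∪ vars ψ

/-- A step in a path addressing a subformula occurrence. -/
inductive Step : Type where
  | neg | left | right
deriving DecidableEq

/-- `occAt φ l pol = some (p, pol')` iff the path `l` addresses an occurrence of the
variable `p` in `φ`, and this occurrence has polarity `pol'` (`true` = positive)
when the ambient polarity of `φ` is `pol`. -/
def occAt : Form → List Step → Bool → Option (ℕ × Bool)
  | .var p, [], pol => some (p, pol)
  | .neg φ, .neg :: l, pol => occAt φ l (!pol)
  | .conj φ _, .left :: l, pol => occAt φ l pol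
  | .conj _ ψ, .right :: l, pol => occAt ψ l pol
  | _, _, _ => none

/-- A variable occurrence in a base: a formula together with a path into it. -/
abbrev Occurrence : Type := Form × List Step

/-- A propositional base: a finite set of formulas. -/
abbrev PB : Type := Finset Form

/-- `o` is a variable occurrence in the base `K`. -/
def IsOcc (K : PB) (o : Occurrence) : Prop :=
  o.1 ∈ K ∧ ∃ p pol, occAt o.1 o.2 true = some (p, pol)

/-- `o` is an occurrence of the variable `p` in `K`, of polarity `pol`. -/
def IsOccOf (K : PB) (o : Occurrence) (p : ℕ) (pol : Bool) : Prop :=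
  o.1 ∈ K ∧ occAt o.1 o.2 true = some (p, pol)

/-- `o` is an occurrence of the variable `p` in `K`. -/
def IsOccVar (K : PB) (o : Occurrence) (p : ℕ) : Prop :=
  ∃ pol, IsOccOf K o p pol

/-- `o` is a positive variable occurrence in `K`. -/
def IsPosOcc (K : PB) (o : Occurrence) : Prop := ∃ p, IsOccOf K o p true

/-- `o` is a negative variable occurrence in `K`. -/
def IsNegOcc (K : PB) (o : Occurrence) : Prop := ∃ p, IsOccOf K o p false

/-- `o` and `o'` are occurrences of the same variable. -/
def sameVar (o o' : Occurrence) : Prop :=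
  ∃ p pol pol', occAt o.1 o.2 true = some (p, pol) ∧ occAt o'.1 o'.2 true = some (p, pol')

/-- The variables occurring in a base. -/
def varsPB (K : PB) : Finset ℕ := K.sup vars

/-- `w` is a (Boolean) model of the base `K` (i.e. of the conjunction of its formulas). -/
def modelsPB (w : ℕ → Bool) (K : PB) : Prop := ∀ φ ∈ K, eval w φ = true

/-- A base is consistent iff the conjunction of its formulas has a model. -/
def ConsistentPB (K : PB) : Prop := ∃ w, modelsPB w K

/-- Classical entailment from a base. -/
def Entails (K : PB) (φ : Form) : Prop := ∀ w, modelsPB w K → eval w φ = true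

/-- Rename every variable occurrence of a formula, the new variable of the
occurrence at path `l` being `f l`. -/
def renameBy : (List Step → ℕ) → Form → Form
  | f, .var _ => .var (f [])
  | f, .neg φ => .neg (renameBy (fun l => f (.neg :: l)) φ)
  | f, .conj φ ψ =>
      .conj (renameBy (fun l => f (.left :: l)) φ) (renameBy (fun l => f (.right :: l)) ψ)

/-- The formula `φ` (viewed as a member of a base) with each occurrence `o`
replaced by the variable `R o`. -/
def renameForm (R : Occurrence → ℕ) (φ : Form) : Form :=
  renameBy (fun l => R (φ, l)) φ

/-- A C-renaming of `K`: it assigns a pairwise distinct fresh variable to each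
occurrence of `K`. -/
structure IsCRenaming (K : PB) (R : Occurrence → ℕ) : Prop where
  fresh : ∀ o, IsOcc K o → R o ∉ varsPB K
  inj : ∀ o o', IsOcc K o → IsOcc K o' → R o = R o' → o = o'

/-- Binary relations on occurrences, viewed as sets of ordered pairs. -/
abbrev Rel : Type := Set (Occurrence × Occurrence)

/-- `r` is an equivalence relation on `Occ(K)`. -/
structure IsEquivOn (K : PB) (r : Rel) : Prop where
  dom : ∀ q ∈ r, IsOcc K q.1 ∧ IsOcc K q.2
  refl : ∀ o, IsOcc K o → (o, o) ∈ r
  symm : ∀ q ∈ r, (q.2, q.1) ∈ r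
  trans : ∀ a b c : Occurrence, (a, b) ∈ r → (b, c) ∈ r → (a, c) ∈ r

/-- Compliance: related occurrences are occurrences of the same variable. -/
def Compliant (r : Rel) : Prop := ∀ q ∈ r, sameVar q.1 q.2

/-- Consistency of the formula `⋀R(K) ∧ ⋀_{(o,o')∈r} (R(o) ↔ R(o'))`. -/
def RelConsistent (K : PB) (R : Occurrence → ℕ) (r : Rel) : Prop :=
  ∃ w : ℕ → Bool, (∀ φ ∈ K, eval w (renameForm R φ) = true) ∧
    ∀ q ∈ r, w (R q.1) = w (R q.2)

/-- Minimal Inconsistency Relation of `K` (w.r.t. the C-renaming `R`). -/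
def IsMIR (K : PB) (R : Occurrence → ℕ) (r : Rel) : Prop :=
  IsEquivOn K r ∧ Compliant r ∧ ¬ RelConsistent K R r ∧
    ∀ r', IsEquivOn K r' → Compliant r' → ¬ RelConsistent K R r' → ¬ r' ⊂ r

/-- Maximal Consistency Relation of `K` (w.r.t. the C-renaming `R`). -/
def IsMCR (K : PB) (R : Occurrence → ℕ) (r : Rel) : Prop :=
  IsEquivOn K r ∧ Compliant r ∧ RelConsistent K R r ∧
    ∀ r', IsEquivOn K r' → Compliant r' → RelConsistent K R r' → ¬ r ⊂ r'

/-- The relation `∼_c^K`: relating occurrences of `K` of the same variable. -/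
def sameVarRel (K : PB) : Rel :=
  {q | IsOcc K q.1 ∧ IsOcc K q.2 ∧ sameVar q.1 q.2}

/-- `PN(r)`: related pairs consisting of a positive and a negative occurrence. -/
def PN (K : PB) (r : Rel) : Rel :=
  {q | q ∈ r ∧ IsPosOcc K q.1 ∧ IsNegOcc K q.2}

/-- A BMCR: an MCR satisfying Maximality-2. -/
def IsBMCR (K : PB) (R : Occurrence → ℕ) (r : Rel) : Prop :=
  IsMCR K R r ∧
    ∀ r', IsEquivOn K r' → Compliant r' → RelConsistent K R r' → ¬ PN K r ⊂ PN K r'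

/-- `H` is a hitting set of the collection `S`. -/
def IsHittingSet {α : Type} (S : Set (Set α)) (H : Set α) : Prop :=
  ∀ s ∈ S, (s ∩ H).Nonempty

/-- `H` is a minimal hitting set of the collection `S`. -/
def IsMinHittingSet {α : Type} (S : Set (Set α)) (H : Set α) : Prop :=
  IsHittingSet S H ∧ ∀ H', H' ⊂ H → ¬ IsHittingSet S H'

/-- `r` is `H`-maximal (for an equivalence relation `r ⊆ ∼_c^K`). -/
def IsHMaximal (K : PB) (H r : Rel) : Prop :=
  r ∩ H = ∅ ∧
    ∀ r', IsEquivOn K r' → r' ⊆ sameVarRel K → r ⊂ r' → (r' ∩ H).Nonempty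

/-- `r` is `H`-minimal (for an equivalence relation `r ⊆ ∼_c^K`). -/
def IsHMinimal (K : PB) (H r : Rel) : Prop :=
  H ⊆ r ∧ ∀ r', IsEquivOn K r' → r' ⊂ r → ¬ H ⊆ r'

/-- The set of all MIRs of `K`. -/
def MIRs (K : PB) (R : Occurrence → ℕ) : Set Rel := {r | IsMIR K R r}

/-- The set of all C-MCRs of `K`: relations `θ ⊆ ∼_c^K` with `∼_c^K ∖ θ` an MCR. -/
def CMCRs (K : PB) (R : Occurrence → ℕ) : Set Rel :=
  {θ | θ ⊆ sameVarRel K ∧ IsMCR K R (sameVarRel K \ θ)}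

/-- `ρ` is a `∼`-renaming for the equivalence relation `r` on `Occ(K)`:
it assigns a distinct variable to each equivalence class (so it is constant on
classes and distinguishes distinct classes), and any class containing all the
occurrences of a variable `p` is mapped to `p` itself. -/
def IsClassRenaming (K : PB) (r : Rel) (ρ : Occurrence → ℕ) : Prop :=
  (∀ o o', IsOcc K o → IsOcc K o' → (ρ o = ρ o' ↔ (o, o') ∈ r)) ∧
    (∀ o p, IsOccVar K o p → (∀ o', IsOccVar K o' p → (o, o') ∈ r) → ρ o = p)

/-- `σ` encodes a tuple `(q₁,…,q_m) ∈ P(ρ_∼, S)` where `S = (p₁,…,p_m)`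
enumerates `var(K) ∩ var(φ)`: it maps each shared variable `p` to a member of
`⌈ρ⌉(p)` and is the identity elsewhere. -/
def IsTupleChoice (K : PB) (φ : Form) (ρ : Occurrence → ℕ) (σ : ℕ → ℕ) : Prop :=
  (∀ p, p ∈ varsPB K → p ∈ vars φ → ∃ o, IsOccVar K o p ∧ σ p = ρ o) ∧
    (∀ p, ¬ (p ∈ varsPB K ∧ p ∈ vars φ) → σ p = p)

/-- Simultaneous substitution of variables by variables. -/
def substV (σ : ℕ → ℕ) : Form → Form
  | .var p => .var (σ p)
  | .neg φ => .neg (substV σ φ)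
  | .conj φ ψ => .conj (substV σ φ) (substV σ ψ)

/-- `ρ_∼(K) ⊢ ψ`. -/
def rhoEntails (K : PB) (ρ : Occurrence → ℕ) (ψ : Form) : Prop :=
  ∀ w : ℕ → Bool, (∀ φ ∈ K, eval w (renameForm ρ φ) = true) → eval w ψ = true

/-- The inference relation `K ⊩₁ φ`. -/
def Inf1 (K : PB) (R : Occurrence → ℕ) (φ : Form) : Prop :=
  ∀ r ρ, IsMCR K R r → IsClassRenaming K r ρ →
    ∃ σ, IsTupleChoice K φ ρ σ ∧ rhoEntails K ρ (substV σ φ)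

/-- The inference relation `K ⊩₂ φ`. -/
def Inf2 (K : PB) (R : Occurrence → ℕ) (φ : Form) : Prop :=
  ∀ r ρ, IsMCR K R r → IsClassRenaming K r ρ →
    ∀ σ, IsTupleChoice K φ ρ σ → rhoEntails K ρ (substV σ φ)

/-- The inference relation `K ⊩₁^B φ`. -/
def Inf1B (K : PB) (R : Occurrence → ℕ) (φ : Form) : Prop :=
  ∀ r ρ, IsBMCR K R r → IsClassRenaming K r ρ →
    ∃ σ, IsTupleChoice K φ ρ σ ∧ rhoEntails K ρ (substV σ φ)

/-- The inference relation `K ⊩₂^B φ`. -/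
def Inf2B (K : PB) (R : Occurrence → ℕ) (φ : Form) : Prop :=
  ∀ r ρ, IsBMCR K R r → IsClassRenaming K r ρ →
    ∀ σ, IsTupleChoice K φ ρ σ → rhoEntails K ρ (substV σ φ)

/-- `μ` is an o-model of `K`: any interpretation `w` with `w (R o) = μ o` for all
occurrences `o` of `K` is a model of `⋀R(K)`. -/
def OModel (K : PB) (R : Occurrence → ℕ) (μ : Occurrence → Bool) : Prop :=
  ∀ w : ℕ → Bool, (∀ o, IsOcc K o → w (R o) = μ o) →
    ∀ φ ∈ K, eval w (renameForm R φ) = true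

/-- `diff_a(μ)`: pairs of occurrences of the same variable on which `μ` differs. -/
def diffA (K : PB) (μ : Occurrence → Bool) : Rel :=
  {q | IsOcc K q.1 ∧ IsOcc K q.2 ∧ sameVar q.1 q.2 ∧ μ q.1 ≠ μ q.2}

/-- `μ` is an a-minimal o-model of `K`. -/
def AMinOModel (K : PB) (R : Occurrence → ℕ) (μ : Occurrence → Bool) : Prop :=
  OModel K R μ ∧ ∀ μ', OModel K R μ' → ¬ diffA K μ' ⊂ diffA K μ

/-- A Boolean interpretation `w` is compatible with an o-interpretation `μ`. -/
def Compatible (K : PB) (μ : Occurrence → Bool) (w : ℕ → Bool) : Prop :=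
  ∀ p ∈ varsPB K, ∃ o, IsOccVar K o p ∧ w p = μ o

/-- The inference relation `K ⊩_{a1} φ`. -/
def InfA1 (K : PB) (R : Occurrence → ℕ) (φ : Form) : Prop :=
  ∀ μ, AMinOModel K R μ → ∃ w, Compatible K μ w ∧ eval w φ = true

/-- The inference relation `K ⊩_{a2} φ`. -/
def InfA2 (K : PB) (R : Occurrence → ℕ) (φ : Form) : Prop :=
  ∀ μ, AMinOModel K R μ → ∀ w, Compatible K μ w → eval w φ = true

/-- LP_m evaluation: an LP_m interpretation assigns a (nonempty) set of truth
values to each variable; it extends to formulas pointwise. -/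
def lpEval (lam : ℕ → Set Bool) : Form → Set Bool
  | .var p => lam p
  | .neg φ => (fun v => !v) '' lpEval lam φ
  | .conj φ ψ => Set.image2 (· && ·) (lpEval lam φ) (lpEval lam ψ)

/-- `lam` is an LP_m interpretation: each variable gets a nonempty set of values. -/
def IsLPInterp (lam : ℕ → Set Bool) : Prop := ∀ p, (lam p).Nonempty

/-- `lam` is an LP_m model of `⋀K`. -/
def LPModelPB (lam : ℕ → Set Bool) (K : PB) : Prop := ∀ φ ∈ K, true ∈ lpEval lam φ

/-- `λ! = {p : λ(p) = {0,1}}`. -/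
def lpBang (lam : ℕ → Set Bool) : Set ℕ := {p | lam p = Set.univ}

/-- `lam` is a minimal LP_m model of `⋀K`. -/
def MinLPModelPB (K : PB) (lam : ℕ → Set Bool) : Prop :=
  IsLPInterp lam ∧ LPModelPB lam K ∧
    ∀ lam', IsLPInterp lam' → LPModelPB lam' K → ¬ lpBang lam' ⊂ lpBang lam

/-- `K ⊢_{LPm} φ`. -/
def LPmEntails (K : PB) (φ : Form) : Prop :=
  ∀ lam, MinLPModelPB K lam → true ∈ lpEval lam φ

/-- Replace the subformula occurrence of `φ` addressed by the path `l` by `ψ`. -/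
def replaceAt : Form → List Step → Form → Form
  | _, [], ψ => ψ
  | .neg φ, .neg :: l, ψ => .neg (replaceAt φ l ψ)
  | .conj φ χ, .left :: l, ψ => .conj (replaceAt φ l ψ) χ
  | .conj φ χ, .right :: l, ψ => .conj φ (replaceAt χ l ψ)
  | φ, _, _ => φ

/-- The equivalence relation `∼_λ` induced on `Occ(K)` by an LP_m interpretation:
its classes are `Occ(p,K)` for `|λ(p)| = 1` and `PosOcc(p,K)`, `NegOcc(p,K)` for
`λ(p) = {0,1}`. -/
def lamRel (K : PB) (lam : ℕ → Set Bool) : Rel :=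
  {q | ∃ p pol pol', IsOccOf K q.1 p pol ∧ IsOccOf K q.2 p pol' ∧
    (lam p = Set.univ → pol = pol')}

open scoped Classical in
/-- The o-interpretation `μ_λ^K` associated with an LP_m interpretation `λ`. -/
noncomputable def muOf (lam : ℕ → Set Bool) (o : Occurrence) : Bool :=
  match occAt o.1 o.2 true with
  | some (p, pol) =>
      if lam p = ({false} : Set Bool) then false
      else if lam p = ({true} : Set Bool) then true
      else pol
  | none => false

/-!
Since `R` is injective on `Occ(K)`, the o-model `μ` is realised by a Boolean interpretation, which
witnesses the consistency of `∼_c^K ∖ diff_a(μ)`. If a compliant consistent equivalence `r`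
strictly extended it, with witness `w`, then `w ∘ R` would be an o-model agreeing on all of `r`:
its `diff_a` adds no pair to `diff_a(μ)` and loses the pairs of `r` outside `∼_c^K ∖ diff_a(μ)`,
contradicting a-minimality.
-/

lemma sameVar_symm {o o' : Occurrence} : sameVar o o' → sameVar o' o
  | ⟨p, pol, pol', h, h'⟩ => ⟨p, pol', pol, h', h⟩

lemma sameVar_trans {a b c : Occurrence} : sameVar a b → sameVar b c → sameVar a c
  | ⟨p, pa, _, ha, hb⟩, ⟨_, _, pc, hb', hc⟩ => by
    obtain rfl : p = _ := congrArg Prod.fst (Option.some.inj (hb.symm.trans hb'))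
    exact ⟨p, pa, pc, ha, hc⟩

lemma sameVar_self_of_isOcc {K : PB} {o : Occurrence} : IsOcc K o → sameVar o o
  | ⟨_, p, pol, h⟩ => ⟨p, pol, pol, h, h⟩

lemma mem_sameVarRel_sdiff_diffA {K : PB} {μ : Occurrence → Bool} {q : Occurrence × Occurrence} :
    q ∈ sameVarRel K \ diffA K μ ↔
      IsOcc K q.1 ∧ IsOcc K q.2 ∧ sameVar q.1 q.2 ∧ μ q.1 = μ q.2 := by
  simp only [sameVarRel, diffA, Set.mem_sdiff, Set.mem_ofPred_eq]
  tauto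

lemma isEquivOn_sameVarRel_sdiff_diffA (K : PB) (μ : Occurrence → Bool) :
    IsEquivOn K (sameVarRel K \ diffA K μ) where
  dom _ hq := ⟨hq.1.1, hq.1.2.1⟩
  refl _ ho := mem_sameVarRel_sdiff_diffA.2 ⟨ho, ho, sameVar_self_of_isOcc ho, rfl⟩
  symm _ hq := by
    obtain ⟨h₁, h₂, hsame, hμ⟩ := mem_sameVarRel_sdiff_diffA.1 hq
    exact mem_sameVarRel_sdiff_diffA.2 ⟨h₂, h₁, sameVar_symm hsame, hμ.symm⟩
  trans _ _ _ hab hbc := by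
    obtain ⟨ha, -, hab, hμab⟩ := mem_sameVarRel_sdiff_diffA.1 hab
    obtain ⟨-, hc, hbc, hμbc⟩ := mem_sameVarRel_sdiff_diffA.1 hbc
    exact mem_sameVarRel_sdiff_diffA.2 ⟨ha, hc, sameVar_trans hab hbc, hμab.trans hμbc⟩

lemma compliant_of_subset_sameVarRel {K : PB} {r : Rel} (h : r ⊆ sameVarRel K) :
    Compliant r :=
  fun _ hq => (h hq).2.2

lemma subset_sameVarRel {K : PB} {r : Rel} (hr : IsEquivOn K r) (hc : Compliant r) :
    r ⊆ sameVarRel K :=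
  fun q hq => ⟨(hr.dom q hq).1, (hr.dom q hq).2, hc q hq⟩

lemma eval_renameBy_congr (w w' : ℕ → Bool) :
    ∀ (φ : Form) (f : List Step → ℕ) (pol : Bool),
      (∀ l, (occAt φ l pol).isSome → w (f l) = w' (f l)) →
      eval w (renameBy f φ) = eval w' (renameBy f φ)
  | .var p, f, pol, h => by
      simpa [renameBy, eval] using h [] (by simp [occAt])
  | .neg φ, f, pol, h => by
      simp only [renameBy, eval]
      rw [eval_renameBy_congr w w' φ _ (!pol)
        (fun l hl => h (.neg :: l) (by simpa [occAt] using hl))]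
  | .conj φ ψ, f, pol, h => by
      simp only [renameBy, eval]
      rw [eval_renameBy_congr w w' φ _ pol
        (fun l hl => h (.left :: l) (by simpa [occAt] using hl)),
        eval_renameBy_congr w w' ψ _ pol
        (fun l hl => h (.right :: l) (by simpa [occAt] using hl))]

lemma eval_renameForm_congr {K : PB} {R : Occurrence → ℕ} {w w' : ℕ → Bool}
    (h : ∀ o, IsOcc K o → w (R o) = w' (R o)) {φ : Form} (hφ : φ ∈ K) :
    eval w (renameForm R φ) = eval w' (renameForm R φ) :=
  eval_renameBy_congr w w' φ _ true fun l hl => by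
    obtain ⟨⟨p, pol⟩, hocc⟩ := Option.isSome_iff_exists.1 hl
    exact h (φ, l) ⟨hφ, p, pol, hocc⟩

lemma oModel_comp {K : PB} {R : Occurrence → ℕ} {w : ℕ → Bool}
    (hw : ∀ φ ∈ K, eval w (renameForm R φ) = true) : OModel K R (w ∘ R) :=
  fun _ hw' φ hφ => (eval_renameForm_congr hw' hφ).trans (hw φ hφ)

lemma IsCRenaming.exists_comp_eq {K : PB} {R : Occurrence → ℕ} (hR : IsCRenaming K R)
    (μ : Occurrence → Bool) : ∃ w : ℕ → Bool, ∀ o, IsOcc K o → w (R o) = μ o := by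
  classical
  refine ⟨fun n => if hn : ∃ o, IsOcc K o ∧ R o = n then μ hn.choose else false,
    fun o ho => ?_⟩
  have hn : ∃ o', IsOcc K o' ∧ R o' = R o := ⟨o, ho, rfl⟩
  beta_reduce
  rw [dif_pos hn, hR.inj _ _ hn.choose_spec.1 ho hn.choose_spec.2]

lemma IsCRenaming.relConsistent_of_oModel {K : PB} {R : Occurrence → ℕ}
    (hR : IsCRenaming K R) {μ : Occurrence → Bool} (hμ : OModel K R μ) :
    RelConsistent K R (sameVarRel K \ diffA K μ) := by
  obtain ⟨w, hw⟩ := hR.exists_comp_eq μ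
  refine ⟨w, hμ w hw, fun q hq => ?_⟩
  obtain ⟨h₁, h₂, -, hμq⟩ := mem_sameVarRel_sdiff_diffA.1 hq
  rw [hw _ h₁, hw _ h₂, hμq]

lemma diffA_ssubset_of_ssubset {K : PB} {μ μ' : Occurrence → Bool} {r : Rel}
    (hr : r ⊆ sameVarRel K) (hss : sameVarRel K \ diffA K μ ⊂ r)
    (hagree : ∀ q ∈ r, μ' q.1 = μ' q.2) : diffA K μ' ⊂ diffA K μ := by
  obtain ⟨q, hqr, hq⟩ := Set.exists_of_ssubset hss
  have hq_diff : q ∈ diffA K μ := by_contra fun h => hq ⟨hr hqr, h⟩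
  refine Set.ssubset_iff_subset_ne.2 ⟨fun q' hq' => ?_, fun h => ?_⟩
  · by_contra hq'μ
    exact hq'.2.2.2 (hagree q' (hss.subset ⟨⟨hq'.1, hq'.2.1, hq'.2.2.1⟩, hq'μ⟩))
  · exact (h ▸ hq_diff).2.2.2 (hagree q hqr)

end Occ

/-- Proposition 12: if `μ` is an a-minimal o-model of `K`, then
`∼_c^K ∖ diff_a(μ)` is an MCR of `K`. -/
theorem aMinimal_oModel_gives_MCR (K : Occ.PB)
    (R : Occ.Occurrence → ℕ) (hR : Occ.IsCRenaming K R)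
    (μ : Occ.Occurrence → Bool) (h : Occ.AMinOModel K R μ) :
    Occ.IsMCR K R (Occ.sameVarRel K \ Occ.diffA K μ) := by
  obtain ⟨hμ, hmin⟩ := h
  refine ⟨Occ.isEquivOn_sameVarRel_sdiff_diffA K μ,
    Occ.compliant_of_subset_sameVarRel Set.sdiff_subset, hR.relConsistent_of_oModel hμ, ?_⟩
  rintro r hr hcomp ⟨w, hw, hagree⟩ hss
  exact hmin (w ∘ R) (Occ.oModel_comp hw)
    (Occ.diffA_ssubset_of_ssubset (Occ.subset_sameVarRel hr hcomp) hss hagree)
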